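/- Let g_A be a Lie algebroid over a local noetherian k-algebra A such that A is g_A-simple. If g_A acts on an A-module M of finite type, then M is a free A-module. In particular, g_A itself (with the adjoint action) is free over A. -/

import Mathlib

/-!
Lift a basis of `κ ⊗[A] M` (`κ` the residue field) to generators `fᵢ` of `M`, and let `I` be the
ideal generated by the coefficients of all relations `∑ vᵢ fᵢ = 0`. Minimality of the generators
puts `I` inside the maximal ideal. Applying `ρ x` to a relation and expanding each `ρ x (fᵢ)` in the
generators gives a new relation whose coefficients are `α(x)(vᵢ)` up to multiples of the `vᵢ`, so
`I` is invariant. By simplicity `I = 0`: the `fᵢ` form a basis. For `g_A` take the adjoint action.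
-/

open IsLocalRing TensorProduct

universe u v w

/-- A Lie algebroid over `A/k`: an `A`-module of finite type with a `k`-Lie algebra structure
and an anchor map `α : g → T_{A/k}` that is `A`-linear and a morphism of `k`-Lie algebras,
satisfying the Leibniz rule `[δ, rη] = α(δ)(r)·η + r·[δ, η]`. -/
structure LieAlgebroid (k : Type u) (A : Type v) (g : Type w) [CommRing k] [CommRing A]
    [Algebra k A] [LieRing g] [LieAlgebra k g] [Module A g] [IsScalarTower k A g] where
  anchor : g →ₗ[A] Derivation k A A
  anchor_bracket : ∀ x y : g, anchor ⁅x, y⁆ = ⁅anchor x, anchor y⁆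
  leibniz : ∀ (x y : g) (r : A), ⁅x, r • y⁆ = anchor x r • y + r • ⁅x, y⁆

namespace LieAlgebroid

variable {k : Type u} {A : Type v} {g : Type w} [CommRing k] [CommRing A]
    [Algebra k A] [LieRing g] [LieAlgebra k g] [Module A g] [IsScalarTower k A g]

/-- A `g_A`-invariant ideal of `A`. -/
def InvariantIdeal (L : LieAlgebroid k A g) (I : Ideal A) : Prop :=
  ∀ x : g, ∀ a ∈ I, L.anchor x a ∈ I

/-- `A` is a simple module over the Lie algebroid: no nonzero proper invariant ideal. -/
def IsSimpleBase (L : LieAlgebroid k A g) : Prop :=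
  ∀ I : Ideal A, L.InvariantIdeal I → I = ⊥ ∨ I = ⊤

/-- An action (not necessarily `A`-linear) of the Lie algebroid `g_A` on an `A`-module `M`:
a map `ρ : g → End_k(M)` with `ρ(δ)(r·m) = α(δ)(r)·m + r·ρ(δ)(m)`. -/
structure Action (L : LieAlgebroid k A g) (M : Type*) [AddCommGroup M] [Module A M]
    [Module k M] [IsScalarTower k A M] : Type _ where
  ρ : g → M → M
  ρ_add : ∀ (x : g) (m m' : M), ρ x (m + m') = ρ x m + ρ x m'
  ρ_smulk : ∀ (x : g) (c : k) (m : M), ρ x (c • m) = c • ρ x m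
  ρ_leibniz : ∀ (x : g) (r : A) (m : M), ρ x (r • m) = L.anchor x r • m + r • ρ x m

end LieAlgebroid

def Submodule.coeffIdeal {R ι : Type*} [CommSemiring R] (N : Submodule R (ι →₀ R)) : Ideal R :=
  Ideal.span {r | ∃ v ∈ N, ∃ i, v i = r}

namespace Submodule

variable {R ι : Type*} [CommSemiring R] {N : Submodule R (ι →₀ R)}

theorem apply_mem_coeffIdeal {v : ι →₀ R} (hv : v ∈ N) (i : ι) : v i ∈ N.coeffIdeal :=
  Ideal.subset_span ⟨v, hv, i, rfl⟩

theorem coeffIdeal_le_iff {I : Ideal R} : N.coeffIdeal ≤ I ↔ ∀ v ∈ N, ∀ i, v i ∈ I := by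
  refine ⟨fun h v hv i => h (apply_mem_coeffIdeal hv i), fun h => Ideal.span_le.mpr ?_⟩
  rintro r ⟨v, hv, i, rfl⟩
  exact h v hv i

theorem eq_bot_of_coeffIdeal_eq_bot (h : N.coeffIdeal = ⊥) : N = ⊥ :=
  eq_bot_iff.mpr fun v hv => Finsupp.ext fun i => by
    simpa [h] using apply_mem_coeffIdeal hv i

end Submodule

theorem Derivation.apply_mem_span {k A : Type*} [CommRing k] [CommRing A] [Algebra k A]
    (D : Derivation k A A) {S : Set A} (hS : ∀ s ∈ S, D s ∈ Ideal.span S) {a : A}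
    (ha : a ∈ Ideal.span S) : D a ∈ Ideal.span S := by
  induction ha using Submodule.span_induction with
  | mem s hs => exact hS s hs
  | zero => simp
  | add a b _ _ ha hb => rw [map_add]; exact add_mem ha hb
  | smul r a _ ha =>
    rw [smul_eq_mul, Derivation.leibniz, smul_eq_mul, smul_eq_mul]
    exact add_mem (Ideal.mul_mem_left _ r ha) (Ideal.mul_mem_right _ _ ‹_›)

theorem IsLocalRing.apply_mem_maximalIdeal_of_tmul_eq_basis {R M ι : Type*} [CommRing R]
    [IsLocalRing R] [AddCommGroup M] [Module R M] (f : ι → M)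
    (b : Module.Basis ι (ResidueField R) (ResidueField R ⊗[R] M)) (hb : ∀ i, 1 ⊗ₜ f i = b i)
    {v : ι →₀ R} (hv : v ∈ LinearMap.ker (Finsupp.linearCombination R f)) (i : ι) :
    v i ∈ maximalIdeal R := by
  have hres : Finsupp.linearCombination (ResidueField R) b
      (v.mapRange (residue R) (map_zero _)) = 0 := by
    have h : TensorProduct.mk R (ResidueField R) M 1 (Finsupp.linearCombination R f v) = 0 := by
      rw [LinearMap.mem_ker.mp hv, map_zero]
    rw [Finsupp.linearCombination_apply, map_finsuppSum] at h
    rw [Finsupp.linearCombination_apply, Finsupp.sum_mapRange_index (by simp), ← h]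
    refine Finsupp.sum_congr fun j _ => ?_
    rw [map_smul, TensorProduct.mk_apply, hb j, ← algebraMap_smul (ResidueField R) (v j) (b j)]
    rfl
  have h0 := linearIndependent_iff.mp b.linearIndependent _ hres
  rw [← residue_eq_zero_iff]
  simpa using DFunLike.congr_fun h0 i

namespace LieAlgebroid

variable {k : Type u} {A : Type v} {g : Type w} [CommRing k] [CommRing A]
    [Algebra k A] [LieRing g] [LieAlgebra k g] [Module A g] [IsScalarTower k A g]
    {L : LieAlgebroid k A g}

theorem invariantIdeal_span {S : Set A} (hS : ∀ x, ∀ s ∈ S, L.anchor x s ∈ Ideal.span S) :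
    L.InvariantIdeal (Ideal.span S) :=
  fun x _ ha => (L.anchor x).apply_mem_span (hS x) ha

theorem IsSimpleBase.eq_bot_of_le_maximalIdeal [IsLocalRing A] (hsimple : L.IsSimpleBase)
    {I : Ideal A} (hI : L.InvariantIdeal I) (hIm : I ≤ maximalIdeal A) : I = ⊥ :=
  (hsimple I hI).resolve_right fun htop =>
    (maximalIdeal.isMaximal A).ne_top (top_le_iff.mp (htop ▸ hIm))

def adjoint (L : LieAlgebroid k A g) : L.Action g where
  ρ x y := ⁅x, y⁆
  ρ_add x := lie_add x
  ρ_smulk x c y := lie_smul c x y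
  ρ_leibniz x r y := L.leibniz x y r

namespace Action

variable {M : Type*} [AddCommGroup M] [Module A M] [Module k M] [IsScalarTower k A M]

def toAddMonoidHom (act : L.Action M) (x : g) : M →+ M :=
  AddMonoidHom.mk' (act.ρ x) (act.ρ_add x)

theorem ρ_zero (act : L.Action M) (x : g) : act.ρ x 0 = 0 := (act.toAddMonoidHom x).map_zero

theorem ρ_linearCombination {ι : Type*} (act : L.Action M) (x : g) (f : ι → M) (v : ι →₀ A) :
    act.ρ x (Finsupp.linearCombination A f v) =
      Finsupp.linearCombination A f (v.mapRange (L.anchor x) (map_zero _)) +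
        v.sum fun j a => a • act.ρ x (f j) := by
  change act.toAddMonoidHom x (v.sum fun j a => a • f j) = _
  rw [map_finsuppSum, Finsupp.linearCombination_apply,
    Finsupp.sum_mapRange_index (by simp), ← Finsupp.sum_add]
  exact Finsupp.sum_congr fun j _ => act.ρ_leibniz x (v j) (f j)

theorem anchor_apply_mem_coeffIdeal_ker {ι : Type*} (act : L.Action M) {f : ι → M}
    (hf : Function.Surjective (Finsupp.linearCombination A f)) (x : g) {v : ι →₀ A}
    (hv : v ∈ LinearMap.ker (Finsupp.linearCombination A f)) (i : ι) :
    L.anchor x (v i) ∈ (LinearMap.ker (Finsupp.linearCombination A f)).coeffIdeal := by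
  set π := Finsupp.linearCombination A f
  choose w hw using fun j => hf (act.ρ x (f j))
  set t : ι →₀ A := v.sum fun j a => a • w j
  set u : ι →₀ A := v.mapRange (L.anchor x) (map_zero _) + t
  have hu : u ∈ LinearMap.ker π := by
    have ht : π t = v.sum fun j a => a • act.ρ x (f j) := by
      rw [map_finsuppSum]
      exact Finsupp.sum_congr fun j _ => by rw [map_smul, hw j]
    rw [LinearMap.mem_ker, map_add, ht, ← ρ_linearCombination, LinearMap.mem_ker.mp hv, ρ_zero]
  have ht : t i ∈ (LinearMap.ker π).coeffIdeal := by
    rw [Finsupp.sum_apply]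
    exact Ideal.sum_mem _ fun j _ =>
      Ideal.mul_mem_right _ _ (Submodule.apply_mem_coeffIdeal hv j)
  have hsplit : L.anchor x (v i) = u i - t i := by simp [u]
  rw [hsplit]
  exact sub_mem (Submodule.apply_mem_coeffIdeal hu i) ht

theorem invariantIdeal_coeffIdeal_ker {ι : Type*} (act : L.Action M) {f : ι → M}
    (hf : Function.Surjective (Finsupp.linearCombination A f)) :
    L.InvariantIdeal (LinearMap.ker (Finsupp.linearCombination A f)).coeffIdeal :=
  invariantIdeal_span fun x _ ⟨_, hv, i, hvi⟩ =>
    hvi ▸ act.anchor_apply_mem_coeffIdeal_ker hf x hv i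

theorem free [IsLocalRing A] [Module.Finite A M] (act : L.Action M) (hsimple : L.IsSimpleBase) :
    Module.Free A M := by
  let b := Module.Basis.ofVectorSpace (ResidueField A) (ResidueField A ⊗[A] M)
  choose f hf using fun i => TensorProduct.mk_surjective A M (ResidueField A)
    Ideal.Quotient.mk_surjective (b i)
  set π := Finsupp.linearCombination A f
  have hsurj : Function.Surjective π := by
    rw [← LinearMap.range_eq_top, Finsupp.range_linearCombination]
    exact IsLocalRing.span_eq_top_of_tmul_eq_basis f b hf
  have hle : (LinearMap.ker π).coeffIdeal ≤ maximalIdeal A :=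
    Submodule.coeffIdeal_le_iff.mpr fun v hv =>
      IsLocalRing.apply_mem_maximalIdeal_of_tmul_eq_basis f b hf hv
  have hker : LinearMap.ker π = ⊥ := Submodule.eq_bot_of_coeffIdeal_eq_bot
    (hsimple.eq_bot_of_le_maximalIdeal (act.invariantIdeal_coeffIdeal_ker hsurj) hle)
  exact Module.Free.of_equiv
    (LinearEquiv.ofBijective π ⟨LinearMap.ker_eq_bot.mp hker, hsurj⟩)

end Action

end LieAlgebroid

theorem free_of_action_of_simple
    (k : Type u) (A : Type v) (g : Type w) [Field k]
    [CommRing A] [IsLocalRing A] [Algebra k A]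
    [LieRing g] [LieAlgebra k g] [Module A g] [IsScalarTower k A g] [Module.Finite A g]
    (L : LieAlgebroid k A g) (hsimple : L.IsSimpleBase)
    (M : Type v) [AddCommGroup M] [Module A M] [Module k M] [IsScalarTower k A M]
    [Module.Finite A M] (act : L.Action M) :
    Module.Free A M ∧ Module.Free A g :=
  ⟨act.free hsimple, L.adjoint.free hsimple⟩
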